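/- arXiv:1511.00353 — 2 statements merged into one kernel-verified Lean document; each statement's English description precedes it below -/
import Mathlib

section
/- Let (E_t)_{t≥1} be i.i.d. nonnegative random variables, B̄ > 0, γ > 0, and μ = E[min{E_1, B̄}]. Then the optimal long-term average throughput Θ, defined as the supremum over all admissible online policies g of liminf_{n→∞} T_n(g), satisfies Θ ≤ ½·log₂(1 + γ·μ). -/
open MeasureTheory ProbabilityTheory Filter Finset

/-!
Clipping at the capacity `B` only wastes energy, so a policy that starts with a full battery can
spend, over slots `1, …, n`, at most `B` plus the clipped arrivals `min (E t) B`, whose expected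
total is `n μ`; hence its average expected power is at most `μ + B / n`. The rate
`½ log₂ (1 + γ p)` is concave and increasing in the power `p`, so Jensen's inequality (over `ω`
and then over the `n` slots) bounds the `n`-horizon throughput by the rate at `μ + B / n`, which
tends to `½ log₂ (1 + γ μ)`.
-/

noncomputable def awgnRate (γ p : ℝ) : ℝ := 1 / 2 * Real.logb 2 (1 + γ * p)

section awgnRate

variable {γ : ℝ}

theorem awgnRate_nonneg (hγ : 0 ≤ γ) {p : ℝ} (hp : 0 ≤ p) : 0 ≤ awgnRate γ p :=
  mul_nonneg (by norm_num)
    (Real.logb_nonneg one_lt_two (le_add_of_nonneg_right (mul_nonneg hγ hp)))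

theorem monotoneOn_awgnRate (hγ : 0 ≤ γ) : MonotoneOn (awgnRate γ) (Set.Ici 0) := by
  rintro p (hp : 0 ≤ p) q - hpq
  have : 0 < 1 + γ * p := by positivity
  unfold awgnRate
  gcongr
  · norm_num

theorem concaveOn_awgnRate (hγ : 0 ≤ γ) : ConcaveOn ℝ (Set.Ici 0) (awgnRate γ) := by
  refine ⟨convex_Ici 0, fun p (hp : 0 ≤ p) q (hq : 0 ≤ q) a b ha hb hab => ?_⟩
  have hlog := strictConcaveOn_log_Ioi.concaveOn.2
    (show 0 < 1 + γ * p by positivity) (show 0 < 1 + γ * q by positivity) ha hb hab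
  have hmix : a • (1 + γ * p) + b • (1 + γ * q) = 1 + γ * (a • p + b • q) := by
    simp only [smul_eq_mul]; linear_combination hab
  rw [hmix] at hlog
  simp only [smul_eq_mul] at hlog ⊢
  have hlog2 := Real.log_pos one_lt_two
  calc a * awgnRate γ p + b * awgnRate γ q
      = (a * Real.log (1 + γ * p) + b * Real.log (1 + γ * q)) / (2 * Real.log 2) := by
        simp only [awgnRate, Real.logb]; ring
    _ ≤ Real.log (1 + γ * (a * p + b * q)) / (2 * Real.log 2) := by gcongr
    _ = awgnRate γ (a * p + b * q) := by simp only [awgnRate, Real.logb]; ring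

theorem continuousAt_awgnRate {p : ℝ} (hp : 1 + γ * p ≠ 0) : ContinuousAt (awgnRate γ) p := by
  unfold awgnRate
  fun_prop (disch := assumption)

theorem continuousOn_awgnRate (hγ : 0 ≤ γ) : ContinuousOn (awgnRate γ) (Set.Ici 0) :=
  fun p (hp : 0 ≤ p) => (continuousAt_awgnRate (by positivity)).continuousWithinAt

theorem measurable_awgnRate : Measurable (awgnRate γ) := by
  unfold awgnRate
  simp only [Real.logb]
  fun_prop

end awgnRate

section Battery

variable {B : ℝ} {g b e : ℕ → ℝ}

theorem battery_le_capacity (hb1 : b 1 = B)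
    (hb2 : ∀ t, 1 ≤ t → b (t + 1) = min (b t - g t + e (t + 1)) B) :
    ∀ t, 1 ≤ t → b t ≤ B
  | 1, _ => hb1.le
  | t + 2, _ => (hb2 (t + 1) (by omega)).trans_le (min_le_right _ _)

theorem sum_Icc_add_battery_le (hb1 : b 1 = B)
    (hb2 : ∀ t, 1 ≤ t → b (t + 1) = min (b t - g t + e (t + 1)) B)
    (hg : ∀ t, 1 ≤ t → g t ≤ b t) (n : ℕ) :
    ∑ t ∈ Icc 1 n, g t + b (n + 1) ≤ B + ∑ t ∈ Icc 1 n, min (e (t + 1)) B := by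
  induction n with
  | zero => simp [hb1]
  | succ n ih =>
    have hstep : b (n + 1 + 1) ≤ b (n + 1) - g (n + 1) + min (e (n + 1 + 1)) B := by
      rw [hb2 (n + 1) (by omega), ← min_add_add_left]
      exact min_le_min_left _ (le_add_of_nonneg_left (sub_nonneg.2 (hg (n + 1) (by omega))))
    rw [sum_Icc_succ_top (by omega), sum_Icc_succ_top (by omega)]
    linarith

end Battery

theorem policy_mem_Icc {Ω : Type*} {B : ℝ} {E g b : ℕ → Ω → ℝ} (hb1 : ∀ ω, b 1 ω = B)
    (hb2 : ∀ t, 1 ≤ t → ∀ ω, b (t + 1) ω = min (b t ω - g t ω + E (t + 1) ω) B)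
    (hg : ∀ t, 1 ≤ t → ∀ ω, 0 ≤ g t ω ∧ g t ω ≤ b t ω) :
    ∀ t, 1 ≤ t → ∀ ω, g t ω ∈ Set.Icc 0 B := fun t ht ω =>
  ⟨(hg t ht ω).1, (hg t ht ω).2.trans (battery_le_capacity (g := fun t => g t ω)
    (b := fun t => b t ω) (e := fun t => E t ω) (hb1 ω) (fun t ht => hb2 t ht ω) t ht)⟩

section Expectation

variable {Ω : Type*} [MeasurableSpace Ω] {P : Measure Ω} [IsProbabilityMeasure P]

theorem ConcaveOn.average_integral_le {E ι : Type*} [NormedAddCommGroup E] [NormedSpace ℝ E]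
    [CompleteSpace E] {S : Set E} {f : E → ℝ} (hf : ConcaveOn ℝ S f) (hfc : ContinuousOn f S)
    (hS : IsClosed S) {s : Finset ι} (hs : s.Nonempty) {X : ι → Ω → E}
    (hXS : ∀ i ∈ s, ∀ᵐ ω ∂P, X i ω ∈ S) (hX : ∀ i ∈ s, Integrable (X i) P)
    (hfX : ∀ i ∈ s, Integrable (fun ω => f (X i ω)) P) :
    (#s : ℝ)⁻¹ * ∑ i ∈ s, ∫ ω, f (X i ω) ∂P ≤ f ((#s : ℝ)⁻¹ • ∑ i ∈ s, ∫ ω, X i ω ∂P) := by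
  have hw : ∑ _i ∈ s, (#s : ℝ)⁻¹ = 1 := by simp [hs.card_ne_zero]
  calc (#s : ℝ)⁻¹ * ∑ i ∈ s, ∫ ω, f (X i ω) ∂P
      ≤ ∑ i ∈ s, (#s : ℝ)⁻¹ • f (∫ ω, X i ω ∂P) := by
        rw [mul_sum]
        simp only [smul_eq_mul]
        gcongr with i hi
        exact hf.le_map_integral hfc hS (hXS i hi) (hX i hi) (hfX i hi)
    _ ≤ f (∑ i ∈ s, (#s : ℝ)⁻¹ • ∫ ω, X i ω ∂P) :=
        hf.le_map_sum (fun _ _ => by positivity) hw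
          fun i hi => hf.1.integral_mem hS (hXS i hi) (hX i hi)
    _ = f ((#s : ℝ)⁻¹ • ∑ i ∈ s, ∫ ω, X i ω ∂P) := by rw [smul_sum]

theorem integrable_of_mem_Icc {X : Ω → ℝ} (hX : Measurable X) {a c : ℝ}
    (h : ∀ ω, X ω ∈ Set.Icc a c) : Integrable X P :=
  .of_bound hX.aestronglyMeasurable (max |a| |c|)
    (ae_of_all _ fun ω => abs_le_max_abs_abs (h ω).1 (h ω).2)

theorem sum_integral_le_of_battery {B : ℝ} (hB : 0 ≤ B) {E g b : ℕ → Ω → ℝ}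
    (hEmeas : ∀ t, Measurable (E t)) (hEnn : ∀ t ω, 0 ≤ E t ω)
    (hident : ∀ t, IdentDistrib (E t) (E 1) P P) (hb1 : ∀ ω, b 1 ω = B)
    (hb2 : ∀ t, 1 ≤ t → ∀ ω, b (t + 1) ω = min (b t ω - g t ω + E (t + 1) ω) B)
    (hg : ∀ t, 1 ≤ t → ∀ ω, 0 ≤ g t ω ∧ g t ω ≤ b t ω) (hgmeas : ∀ t, 1 ≤ t → Measurable (g t))
    (n : ℕ) :
    ∑ t ∈ Icc 1 n, ∫ ω, g t ω ∂P ≤ B + n * ∫ ω, min (E 1 ω) B ∂P := by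
  have hgi : ∀ t ∈ Icc 1 n, Integrable (g t) P := fun t ht =>
    have ht : 1 ≤ t := (mem_Icc.1 ht).1
    integrable_of_mem_Icc (hgmeas t ht) (policy_mem_Icc hb1 hb2 hg t ht)
  have hEi : ∀ t, Integrable (fun ω => min (E t ω) B) P := fun t =>
    integrable_of_mem_Icc ((hEmeas t).min measurable_const)
      fun ω => ⟨le_min (hEnn t ω) hB, min_le_right _ _⟩
  have hEint : ∀ t, ∫ ω, min (E t ω) B ∂P = ∫ ω, min (E 1 ω) B ∂P := fun t =>
    ((hident t).comp (measurable_id.min measurable_const)).integral_eq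
  have hEsum : Integrable (fun ω => ∑ t ∈ Icc 1 n, min (E (t + 1) ω) B) P :=
    integrable_finsetSum _ fun t _ => hEi (t + 1)
  calc ∑ t ∈ Icc 1 n, ∫ ω, g t ω ∂P
      = ∫ ω, ∑ t ∈ Icc 1 n, g t ω ∂P := (integral_finsetSum _ hgi).symm
    _ ≤ ∫ ω, (B + ∑ t ∈ Icc 1 n, min (E (t + 1) ω) B) ∂P := by
        refine integral_mono (integrable_finsetSum _ hgi) ((integrable_const B).add hEsum)
          fun ω => ?_
        have hbat := sum_Icc_add_battery_le (g := fun t => g t ω) (b := fun t => b t ω)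
          (e := fun t => E t ω) (hb1 ω) (fun t ht => hb2 t ht ω) (fun t ht => (hg t ht ω).2) n
        have hb_nonneg := (hg (n + 1) (by omega) ω).1.trans (hg (n + 1) (by omega) ω).2
        dsimp only at hbat ⊢
        linarith
    _ = B + n * ∫ ω, min (E 1 ω) B ∂P := by
        rw [integral_add (integrable_const B) hEsum, integral_const,
          integral_finsetSum _ fun t _ => hEi (t + 1)]
        simp [hEint]

theorem average_integral_awgnRate_le {ι : Type*} {γ c : ℝ} (hγ : 0 ≤ γ) {s : Finset ι}
    (hs : s.Nonempty) {X : ι → Ω → ℝ} (hXmeas : ∀ i ∈ s, Measurable (X i))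
    (hX : ∀ i ∈ s, ∀ ω, X i ω ∈ Set.Icc 0 c) :
    (#s : ℝ)⁻¹ * ∑ i ∈ s, ∫ ω, awgnRate γ (X i ω) ∂P
      ≤ awgnRate γ ((#s : ℝ)⁻¹ * ∑ i ∈ s, ∫ ω, X i ω ∂P) := by
  have hrate : ∀ i ∈ s, ∀ ω, awgnRate γ (X i ω) ∈ Set.Icc 0 (awgnRate γ c) := fun i hi ω =>
    have ⟨h0, hc⟩ := hX i hi ω
    ⟨awgnRate_nonneg hγ h0, monotoneOn_awgnRate hγ h0 (h0.trans hc) hc⟩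
  exact (concaveOn_awgnRate hγ).average_integral_le (continuousOn_awgnRate hγ) isClosed_Ici hs
    (fun i hi => ae_of_all _ fun ω => (hX i hi ω).1)
    (fun i hi => integrable_of_mem_Icc (hXmeas i hi) (hX i hi))
    (fun i hi => integrable_of_mem_Icc (measurable_awgnRate.comp (hXmeas i hi)) (hrate i hi))

theorem liminf_average_integral_awgnRate_le {γ B μ : ℝ} (hγ : 0 ≤ γ) (hμ : 0 ≤ μ)
    {X : ℕ → Ω → ℝ} (hXmeas : ∀ t, 1 ≤ t → Measurable (X t))
    (hX : ∀ t, 1 ≤ t → ∀ ω, X t ω ∈ Set.Icc 0 B)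
    (hsum : ∀ n : ℕ, ∑ t ∈ Icc 1 n, ∫ ω, X t ω ∂P ≤ B + n * μ) :
    liminf (fun n : ℕ => 1 / (n : ℝ) * ∑ t ∈ Icc 1 n, ∫ ω, awgnRate γ (X t ω) ∂P) atTop
      ≤ awgnRate γ μ := by
  have hbound : ∀ n : ℕ, 1 ≤ n →
      1 / (n : ℝ) * ∑ t ∈ Icc 1 n, ∫ ω, awgnRate γ (X t ω) ∂P ≤ awgnRate γ (μ + B / n) := by
    intro n hn
    have hn' : (0 : ℝ) < n := by exact_mod_cast hn
    have hjensen := average_integral_awgnRate_le (P := P) hγ ⟨1, mem_Icc.2 ⟨le_rfl, hn⟩⟩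
      (fun t ht => hXmeas t (mem_Icc.1 ht).1) (fun t ht => hX t (mem_Icc.1 ht).1)
    rw [show (#(Icc 1 n) : ℝ) = n by simp, ← one_div] at hjensen
    have havg_nonneg : 0 ≤ 1 / (n : ℝ) * ∑ t ∈ Icc 1 n, ∫ ω, X t ω ∂P :=
      mul_nonneg (by positivity) (sum_nonneg fun t ht => integral_nonneg fun ω =>
        (hX t (mem_Icc.1 ht).1 ω).1)
    have havg_le : 1 / (n : ℝ) * ∑ t ∈ Icc 1 n, ∫ ω, X t ω ∂P ≤ μ + B / n := by
      rw [one_div_mul_eq_div, div_le_iff₀ hn', add_mul, div_mul_cancel₀ _ hn'.ne']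
      linarith [hsum n]
    exact hjensen.trans
      (monotoneOn_awgnRate hγ havg_nonneg (havg_nonneg.trans havg_le) havg_le)
  have hlim : Tendsto (fun n : ℕ => awgnRate γ (μ + B / n)) atTop (nhds (awgnRate γ μ)) :=
    (continuousAt_awgnRate (by positivity)).tendsto.comp
      (by simpa using tendsto_const_nhds.add (tendsto_const_div_atTop_nhds_zero_nat B))
  have hnonneg : ∀ n : ℕ, 0 ≤ 1 / (n : ℝ) * ∑ t ∈ Icc 1 n, ∫ ω, awgnRate γ (X t ω) ∂P :=
    fun n => mul_nonneg (by positivity) (sum_nonneg fun t ht => integral_nonneg fun ω =>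
      awgnRate_nonneg hγ (hX t (mem_Icc.1 ht).1 ω).1)
  exact (liminf_le_liminf (eventually_atTop.2 ⟨1, hbound⟩) (isBoundedUnder_of ⟨0, hnonneg⟩)
    hlim.isBoundedUnder_le.isCoboundedUnder_ge).trans_eq hlim.liminf_eq

end Expectation

theorem stmt_2_general {Ω : Type*} [MeasurableSpace Ω] (P : Measure Ω) [IsProbabilityMeasure P]
    (B γ : ℝ) (hB : 0 < B) (hγ : 0 < γ)
    (E : ℕ → Ω → ℝ) (hEmeas : ∀ t, Measurable (E t))
    (hEnn : ∀ t ω, 0 ≤ E t ω)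
    (hident : ∀ t, IdentDistrib (E t) (E 1) P P)
    (μ : ℝ) (hμ : μ = ∫ ω, min (E 1 ω) B ∂P) :
    sSup {r : ℝ | ∃ g b : ℕ → Ω → ℝ,
        (∀ ω, b 1 ω = B) ∧
        (∀ t, 1 ≤ t → ∀ ω, b (t + 1) ω = min (b t ω - g t ω + E (t + 1) ω) B) ∧
        (∀ t, 1 ≤ t → ∀ ω, 0 ≤ g t ω ∧ g t ω ≤ b t ω) ∧
        (∀ t, 1 ≤ t → ∃ h : (Fin t → ℝ) → ℝ, Measurable h ∧
          ∀ ω, g t ω = h (fun i => E (i.1 + 1) ω)) ∧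
        r = liminf (fun n : ℕ => (1 / (n : ℝ)) * ∑ t ∈ Finset.Icc 1 n,
              ∫ ω, (1 / 2) * Real.logb 2 (1 + γ * g t ω) ∂P) atTop}
      ≤ (1 / 2) * Real.logb 2 (1 + γ * μ) := by
  have hμ_nonneg : 0 ≤ μ := hμ ▸ integral_nonneg fun ω => le_min (hEnn 1 ω) hB.le
  refine Real.sSup_le ?_ (awgnRate_nonneg hγ.le hμ_nonneg)
  rintro r ⟨g, b, hb1, hb2, hg, hg_online, rfl⟩
  have hgmeas : ∀ t, 1 ≤ t → Measurable (g t) := fun t ht => by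
    obtain ⟨h, hh, hgh⟩ := hg_online t ht
    rw [funext hgh]
    exact hh.comp (measurable_pi_lambda _ fun i => hEmeas _)
  refine liminf_average_integral_awgnRate_le hγ.le hμ_nonneg hgmeas
    (policy_mem_Icc hb1 hb2 hg) fun n => ?_
  rw [hμ]
  exact sum_integral_le_of_battery hB.le hEmeas hEnn hident hb1 hb2 hg hgmeas n

/-- **Upper bound on the optimal long-term average throughput.** For i.i.d. nonnegative
energy arrivals `E`, battery capacity `B > 0`, SNR `γ > 0`, and `μ = 𝔼[min (E 1) B]`,
the optimal throughput `Θ`, i.e. the supremum over all admissible online policies of the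
liminf of the `n`-horizon expected throughput, satisfies `Θ ≤ ½ log₂(1 + γ μ)`. -/
theorem stmt_2 {Ω : Type*} [MeasurableSpace Ω] (P : Measure Ω) [IsProbabilityMeasure P]
    (B γ : ℝ) (hB : 0 < B) (hγ : 0 < γ)
    (E : ℕ → Ω → ℝ) (hEmeas : ∀ t, Measurable (E t))
    (hEnn : ∀ t ω, 0 ≤ E t ω)
    (hindep : iIndepFun E P)
    (hident : ∀ t, IdentDistrib (E t) (E 1) P P)
    (μ : ℝ) (hμ : μ = ∫ ω, min (E 1 ω) B ∂P) :
    sSup {r : ℝ | ∃ g b : ℕ → Ω → ℝ,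
        (∀ ω, b 1 ω = B) ∧
        (∀ t, 1 ≤ t → ∀ ω, b (t + 1) ω = min (b t ω - g t ω + E (t + 1) ω) B) ∧
        (∀ t, 1 ≤ t → ∀ ω, 0 ≤ g t ω ∧ g t ω ≤ b t ω) ∧
        (∀ t, 1 ≤ t → ∃ h : (Fin t → ℝ) → ℝ, Measurable h ∧
          ∀ ω, g t ω = h (fun i => E (i.1 + 1) ω)) ∧
        r = liminf (fun n : ℕ => (1 / (n : ℝ)) * ∑ t ∈ Finset.Icc 1 n,
              ∫ ω, (1 / 2) * Real.logb 2 (1 + γ * g t ω) ∂P) atTop}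
      ≤ (1 / 2) * Real.logb 2 (1 + γ * μ) :=
  stmt_2_general P B γ hB hγ E hEmeas hEnn hident μ hμ
end

section
/- Let 0 < p ≤ 1, B̄ > 0, γ > 0, and let (E_t)_{t≥1} be i.i.d. random variables with P(E_t = B̄) = p and P(E_t = 0) = 1−p. Define the battery process b_1 = B̄ and b_{t+1} = min{(1−p)·b_t + E_{t+1}, B̄}, and the fixed fraction policy g_t = p·b_t. Then liminf_{n→∞} (1/n)∑_{t=1}^n E[½·log₂(1 + γ·g_t)] ≥ (1/2)·½·log₂(1 + γ·p·B̄). -/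
/-!
Almost surely every arrival is `0` or `B`, so the battery stays in `[0, B]`: an arrival fills it,
otherwise it keeps the fraction `1 - p`. As the arrival at time `t + 1` is independent of `b t`,
the means `m t = 𝔼[b t]` satisfy `m (t + 1) = p B + (1 - p)² m t` with `m 1 = B`, so `m t ≥ B / 2`.
By concavity of the logarithm, on `[0, B]` the rate `½ log₂ (1 + γ p x)` dominates the chord
`(x / B) r`, where `r` is the full-battery rate; hence every expected rate is at least `r / 2`, and
so is the liminf of their Cesàro means.
-/

open MeasureTheory ProbabilityTheory Filter Finset

lemma mul_logb_one_add_le_logb_one_add_mul {b a x : ℝ} (hb : 1 < b) (ha : 0 ≤ a) (hx0 : 0 ≤ x)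
    (hx1 : x ≤ 1) : x * Real.logb b (1 + a) ≤ Real.logb b (1 + a * x) := by
  have hconc := strictConcaveOn_log_Ioi.concaveOn.2 (x := 1 + a) (y := 1)
    (Set.mem_Ioi.mpr (by linarith)) (Set.mem_Ioi.mpr one_pos) hx0 (sub_nonneg.mpr hx1) (by ring)
  have hcomb : x • (1 + a) + (1 - x) • (1 : ℝ) = 1 + a * x := by simp only [smul_eq_mul]; ring
  rw [hcomb, smul_eq_mul, smul_eq_mul, Real.log_one, mul_zero, add_zero] at hconc
  rw [Real.logb, Real.logb, ← mul_div_assoc]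
  exact div_le_div_of_nonneg_right hconc (Real.log_pos hb).le

lemma le_liminf_average {u : ℕ → ℝ} {c C : ℝ} (hu : ∀ t, 1 ≤ t → u t ∈ Set.Icc c C) :
    c ≤ liminf (fun n : ℕ => (1 / (n : ℝ)) * ∑ t ∈ Icc 1 n, u t) atTop := by
  have havg : ∀ n : ℕ, 1 ≤ n → (1 / (n : ℝ)) * ∑ t ∈ Icc 1 n, u t ∈ Set.Icc c C := by
    intro n hn
    have hn0 : (0 : ℝ) < n := by exact_mod_cast hn
    have hcard : ((Icc 1 n).card : ℝ) = n := by simp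
    have hlo := card_nsmul_le_sum (Icc 1 n) u c fun t ht => (hu t (mem_Icc.mp ht).1).1
    have hhi := sum_le_card_nsmul (Icc 1 n) u C fun t ht => (hu t (mem_Icc.mp ht).1).2
    rw [nsmul_eq_mul, hcard] at hlo hhi
    rw [one_div_mul_eq_div]
    exact ⟨(le_div_iff₀' hn0).mpr hlo, (div_le_iff₀' hn0).mpr hhi⟩
  refine le_liminf_of_le ?_ (eventually_atTop.mpr ⟨1, fun n hn => (havg n hn).1⟩)
  exact isCoboundedUnder_ge_of_eventually_le atTop
    (eventually_atTop.mpr ⟨1, fun n hn => (havg n hn).2⟩)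

lemma half_le_of_eq_add_sq_mul {m : ℕ → ℝ} {p B : ℝ} (hB : 0 ≤ B) (hm1 : m 1 = B)
    (hrec : ∀ t, 1 ≤ t → m (t + 1) = p * B + (1 - p) ^ 2 * m t) : ∀ t, 1 ≤ t → B / 2 ≤ m t := by
  intro t ht
  induction t, ht using Nat.le_induction with
  | base => linarith
  | succ t ht ih =>
    -- `p B + (1 - p)² B / 2 = B / 2 + p² B / 2`
    rw [hrec t ht]
    nlinarith [mul_le_mul_of_nonneg_left ih (sq_nonneg (1 - p)), mul_nonneg hB (sq_nonneg p)]

lemma battery_mem_Icc {p B : ℝ} {e β : ℕ → ℝ} (hp1 : p ≤ 1) (hB : 0 ≤ B)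
    (he : ∀ t, 1 ≤ t → 0 ≤ e t) (hβ1 : β 1 = B)
    (hβ : ∀ t, 1 ≤ t → β (t + 1) = min ((1 - p) * β t + e (t + 1)) B) :
    ∀ t, 1 ≤ t → β t ∈ Set.Icc 0 B := by
  intro t ht
  induction t, ht using Nat.le_induction with
  | base => rw [hβ1]; exact ⟨hB, le_rfl⟩
  | succ t ht ih =>
    rw [hβ t ht]
    have := mul_nonneg (sub_nonneg.mpr hp1) ih.1
    exact ⟨le_min (by linarith [he (t + 1) (by omega)]) hB, min_le_right _ _⟩

abbrev pastMeasurableSpace {Ω β : Type*} [MeasurableSpace β] (E : ℕ → Ω → β) (t : ℕ) :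
    MeasurableSpace Ω :=
  ⨆ i ≤ t, MeasurableSpace.comap (E i) inferInstance

lemma comap_le_pastMeasurableSpace {Ω β : Type*} [MeasurableSpace β] (E : ℕ → Ω → β) {i t : ℕ}
    (hi : i ≤ t) : MeasurableSpace.comap (E i) inferInstance ≤ pastMeasurableSpace E t :=
  le_iSup₂ (f := fun i (_ : i ≤ t) => MeasurableSpace.comap (E i) inferInstance) i hi

lemma measurable_battery {Ω : Type*} {p B : ℝ} {E b : ℕ → Ω → ℝ} (hb1 : ∀ ω, b 1 ω = B)
    (hbrec : ∀ t, 1 ≤ t → ∀ ω, b (t + 1) ω = min ((1 - p) * b t ω + E (t + 1) ω) B) :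
    ∀ t, 1 ≤ t → Measurable[pastMeasurableSpace E t] (b t) := by
  intro t ht
  induction t, ht using Nat.le_induction with
  | base => rw [funext hb1]; exact measurable_const
  | succ t ht ih =>
    have hpast : Measurable[pastMeasurableSpace E (t + 1)] (b t) :=
      ih.mono (biSup_mono fun i hi => Nat.le_succ_of_le hi) le_rfl
    have hnew : Measurable[pastMeasurableSpace E (t + 1)] (E (t + 1)) :=
      (comap_measurable (E (t + 1))).mono (comap_le_pastMeasurableSpace E le_rfl) le_rfl
    rw [funext (hbrec t ht)]
    exact ((hpast.const_mul _).add hnew).min measurable_const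

section Probability

variable {Ω : Type*} [MeasurableSpace Ω] {P : Measure Ω}

lemma ae_eq_or_eq_of_measure_add_eq_one [IsProbabilityMeasure P] {X : Ω → ℝ} (hX : Measurable X)
    {a c : ℝ} (hac : a ≠ c) (h : P {ω | X ω = a} + P {ω | X ω = c} = 1) :
    ∀ᵐ ω ∂P, X ω = a ∨ X ω = c := by
  have hmeas : ∀ x, MeasurableSet {ω | X ω = x} := fun x => hX (measurableSet_singleton x)
  have hdisj : Disjoint {ω | X ω = a} {ω | X ω = c} :=
    Set.disjoint_left.mpr fun ω ha hc => hac (ha.symm.trans hc)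
  have hunion : {ω | X ω = a ∨ X ω = c} = {ω | X ω = a} ∪ {ω | X ω = c} := Set.ofPred_or
  rw [ae_iff_measure_eq (hunion ▸ ((hmeas a).union (hmeas c)).nullMeasurableSet), hunion,
    measure_union hdisj (hmeas c), h, measure_univ]

lemma ProbabilityTheory.iIndepFun.indepFun_succ_of_measurable_past {β γ : Type*} [MeasurableSpace β]
    [MeasurableSpace γ] {E : ℕ → Ω → β} (hindep : iIndepFun E P) (hE : ∀ t, Measurable (E t))
    {X : Ω → γ} {t : ℕ} (hX : Measurable[pastMeasurableSpace E t] X) :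
    IndepFun X (E (t + 1)) P := by
  have hpast := indep_iSup_of_disjoint (fun i => (hE i).comap_le) hindep.iIndep
    (S := Set.Iic t) (T := {t + 1}) (by simp)
  rw [IndepFun_iff_Indep]
  exact indep_of_indep_of_le_right (indep_of_indep_of_le_left hpast hX.comap_le)
    (le_iSup₂ (f := fun i (_ : i ∈ ({t + 1} : Set ℕ)) => MeasurableSpace.comap (E i) inferInstance)
      (t + 1) rfl)

lemma integral_min_one_sub_mul_add [IsProbabilityMeasure P] {p B : ℝ} (hp0 : 0 ≤ p) (hp1 : p ≤ 1)
    {X Y : Ω → ℝ} (hXY : IndepFun X Y P) (hX : Measurable X) (hY : Measurable Y)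
    (hXbnd : ∀ᵐ ω ∂P, X ω ∈ Set.Icc 0 B) (hYval : ∀ᵐ ω ∂P, Y ω = B ∨ Y ω = 0)
    (hYB : P {ω | Y ω = B} = ENNReal.ofReal p) :
    ∫ ω, min ((1 - p) * X ω + Y ω) B ∂P = p * B + (1 - p) ^ 2 * ∫ ω, X ω ∂P := by
  set χ : Ω → ℝ := (Y ⁻¹' {B}).indicator 1 with hχ
  have hAmeas : MeasurableSet (Y ⁻¹' {B}) := hY (measurableSet_singleton B)
  have hXχ : IndepFun X χ P :=
    hXY.comp measurable_id (measurable_const.indicator (measurableSet_singleton B))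
  have hXint : Integrable X P := .of_mem_Icc 0 B hX.aemeasurable hXbnd
  have hχint : Integrable χ P := (integrable_const 1).indicator hAmeas
  have hχmean : ∫ ω, χ ω ∂P = p := by
    rw [integral_indicator_one hAmeas, measureReal_def]
    exact (congrArg ENNReal.toReal hYB).trans (ENNReal.toReal_ofReal hp0)
  -- an arrival fills the battery, otherwise a fraction `p` of it is spent
  have hstep : (fun ω => min ((1 - p) * X ω + Y ω) B) =ᵐ[P]
      fun ω => (1 - p) * X ω + B * χ ω - (1 - p) * (X ω * χ ω) := by
    filter_upwards [hXbnd, hYval] with ω hXω hYω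
    have hkeep := mul_nonneg (sub_nonneg.mpr hp1) hXω.1
    have hspent := mul_le_of_le_one_left hXω.1 (by linarith : 1 - p ≤ 1)
    by_cases hA : Y ω = B
    · have hχω : χ ω = 1 := by simp [hχ, hA]
      rw [hχω, hA, min_eq_right (by linarith)]
      ring
    · have hχω : χ ω = 0 := by simp [hχ, hA]
      rw [hχω, hYω.resolve_left hA, add_zero, min_eq_left (by linarith [hXω.2])]
      ring
  have hfill : Integrable (fun ω => (1 - p) * X ω + B * χ ω) P :=
    (hXint.const_mul _).add (hχint.const_mul _)
  have hspend : Integrable (fun ω => (1 - p) * (X ω * χ ω)) P :=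
    (hXχ.integrable_mul hXint hχint).const_mul _
  rw [integral_congr_ae hstep, integral_sub hfill hspend,
    integral_add (hXint.const_mul _) (hχint.const_mul _),
    integral_const_mul, integral_const_mul, integral_const_mul,
    hXχ.integral_fun_mul_eq_mul_integral hX.aestronglyMeasurable hχint.aestronglyMeasurable,
    hχmean]
  ring

lemma integral_half_logb_one_add_mul_mem_Icc [IsProbabilityMeasure P] {B c : ℝ} (hB : 0 < B)
    (hc : 0 ≤ c) {X : Ω → ℝ} (hX : Measurable X) (hXbnd : ∀ᵐ ω ∂P, X ω ∈ Set.Icc 0 B)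
    (hmean : B / 2 ≤ ∫ ω, X ω ∂P) :
    ∫ ω, 1 / 2 * Real.logb 2 (1 + c * X ω) ∂P ∈
      Set.Icc (1 / 2 * (1 / 2 * Real.logb 2 (1 + c * B))) (1 / 2 * Real.logb 2 (1 + c * B)) := by
  set r := 1 / 2 * Real.logb 2 (1 + c * B)
  have hbound : ∀ᵐ ω ∂P, X ω / B * r ≤ 1 / 2 * Real.logb 2 (1 + c * X ω) ∧
      1 / 2 * Real.logb 2 (1 + c * X ω) ≤ r := by
    filter_upwards [hXbnd] with ω hω
    have hconc := mul_logb_one_add_le_logb_one_add_mul one_lt_two (mul_nonneg hc hB.le)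
      (div_nonneg hω.1 hB.le) ((div_le_one hB).mpr hω.2)
    rw [mul_assoc c, mul_div_cancel₀ _ hB.ne'] at hconc
    have hmono : Real.logb 2 (1 + c * X ω) ≤ Real.logb 2 (1 + c * B) :=
      Real.logb_le_logb_of_le one_lt_two (by nlinarith [hω.1]) (by nlinarith [hω.2])
    constructor <;> simp only [r] <;> linarith
  have hXint : Integrable X P := .of_mem_Icc 0 B hX.aemeasurable hXbnd
  have hr : 0 ≤ r := by
    have := Real.logb_nonneg one_lt_two (by nlinarith : 1 ≤ 1 + c * B)
    positivity
  have hfmeas : Measurable fun ω => 1 / 2 * Real.logb 2 (1 + c * X ω) := by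
    simp only [Real.logb]
    fun_prop
  have hfint : Integrable (fun ω => 1 / 2 * Real.logb 2 (1 + c * X ω)) P := by
    refine .of_mem_Icc 0 r hfmeas.aemeasurable ?_
    filter_upwards [hXbnd, hbound] with ω hω hbω
    exact ⟨by nlinarith [div_nonneg hω.1 hB.le], hbω.2⟩
  constructor
  · calc 1 / 2 * r ≤ (∫ ω, X ω ∂P) / B * r :=
          mul_le_mul_of_nonneg_right (by rw [le_div_iff₀ hB]; linarith) hr
      _ = ∫ ω, X ω / B * r ∂P := by rw [integral_mul_const, integral_div]
      _ ≤ _ := integral_mono_ae ((hXint.div_const B).mul_const r) hfint (hbound.mono fun _ h => h.1)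
  · calc _ ≤ ∫ _, r ∂P := integral_mono_ae hfint (integrable_const r) (hbound.mono fun _ h => h.2)
      _ = r := by simp

end Probability

/-- **Multiplicative gap of the fixed fraction policy under Bernoulli arrivals.** For i.i.d.
arrivals with `P(E t = B) = p`, `P(E t = 0) = 1 - p`, battery `b 1 = B`,
`b (t+1) = min ((1-p) b t + E (t+1)) B`, and fixed fraction policy `g t = p * b t`, the
long-term average throughput satisfies
`liminf_n (1/n) ∑_{t=1}^n 𝔼[½ log₂(1 + γ p b t)] ≥ (1/2) ½ log₂(1 + γ p B)`. -/
theorem stmt_7 {Ω : Type*} [MeasurableSpace Ω] (P : Measure Ω) [IsProbabilityMeasure P]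
    (p B γ : ℝ) (hp0 : 0 < p) (hp1 : p ≤ 1) (hB : 0 < B) (hγ : 0 < γ)
    (E : ℕ → Ω → ℝ) (hEmeas : ∀ t, Measurable (E t))
    (hindep : iIndepFun E P)
    (hbern : ∀ t, 1 ≤ t → P {ω | E t ω = B} = ENNReal.ofReal p ∧
      P {ω | E t ω = 0} = ENNReal.ofReal (1 - p))
    (b g : ℕ → Ω → ℝ)
    (hb1 : ∀ ω, b 1 ω = B)
    (hbrec : ∀ t, 1 ≤ t → ∀ ω, b (t + 1) ω = min ((1 - p) * b t ω + E (t + 1) ω) B)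
    (hg : ∀ t, 1 ≤ t → ∀ ω, g t ω = p * b t ω) :
    (1 / 2) * ((1 / 2) * Real.logb 2 (1 + γ * p * B))
      ≤ liminf (fun n : ℕ => (1 / (n : ℝ)) * ∑ t ∈ Finset.Icc 1 n,
          ∫ ω, (1 / 2) * Real.logb 2 (1 + γ * g t ω) ∂P) atTop := by
  have hae : ∀ᵐ ω ∂P, ∀ t, 1 ≤ t → E t ω = B ∨ E t ω = 0 := by
    refine ae_all_iff.mpr fun t => ?_
    by_cases ht : 1 ≤ t
    · have htotal : P {ω | E t ω = B} + P {ω | E t ω = 0} = 1 := by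
        rw [(hbern t ht).1, (hbern t ht).2, ← ENNReal.ofReal_add hp0.le (by linarith)]
        simp
      exact (ae_eq_or_eq_of_measure_add_eq_one (hEmeas t) hB.ne' htotal).mono fun _ h _ => h
    · exact ae_of_all _ fun _ h => absurd h ht
  have hbnd : ∀ᵐ ω ∂P, ∀ t, 1 ≤ t → b t ω ∈ Set.Icc 0 B := by
    filter_upwards [hae] with ω hω
    refine battery_mem_Icc (e := fun t => E t ω) (β := fun t => b t ω) hp1 hB.le (fun t ht => ?_)
      (hb1 ω) fun t ht => hbrec t ht ω
    rcases hω t ht with h | h <;> simp [h, hB.le]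
  have hmeas : ∀ t, 1 ≤ t → Measurable (b t) := fun t ht =>
    (measurable_battery hb1 hbrec t ht).mono (iSup₂_le fun i _ => (hEmeas i).comap_le) le_rfl
  have hmean : ∀ t, 1 ≤ t → B / 2 ≤ ∫ ω, b t ω ∂P := by
    refine half_le_of_eq_add_sq_mul (p := p) hB.le (by simp [hb1]) fun t ht => ?_
    simp only [hbrec t ht]
    exact integral_min_one_sub_mul_add hp0.le hp1
      (hindep.indepFun_succ_of_measurable_past hEmeas (measurable_battery hb1 hbrec t ht))
      (hmeas t ht) (hEmeas _) (hbnd.mono fun _ h => h t ht)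
      (hae.mono fun _ h => h (t + 1) (by omega))
      (hbern (t + 1) (by omega)).1
  refine le_liminf_average (C := 1 / 2 * Real.logb 2 (1 + γ * p * B)) fun t ht => ?_
  have hgt : ∀ ω, γ * g t ω = γ * p * b t ω := fun ω => by rw [hg t ht, mul_assoc]
  simp only [hgt]
  exact integral_half_logb_one_add_mul_mem_Icc hB (by positivity) (hmeas t ht)
    (hbnd.mono fun _ h => h t ht) (hmean t ht)
end
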